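/- arXiv:1404.6649 — 3 statements merged into one kernel-verified Lean document; each statement's English description precedes it below -/
import Mathlib

section
/- Let a > 0 and let b satisfy 0 < b < π/2. Then for every real λ one has |K̂_a(λ)| ≤ κ·e^{−b|λ|}, where κ = κ(a,b) = 2·∫_0^∞ exp(−a·cos(b)·cosh u) du. -/
/-!
The integrand `f z = exp (-a cosh z - i λ z)` is entire, and on the line `Im z = t` its
modulus is `exp (λ t) exp (-a cos t cosh x)`, which decays doubly exponentially as long as
`|t| < π/2`. In that strip the line integral `J t = ∫ f (x + t i) dx` may be differentiated
under the integral sign, and `J' t = i ∫ ∂ₓ f (x + t i) dx = 0`, so `J` is constant and equals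
`K̂_a(λ)`.
Taking `t = -b · sign λ` turns the factor `exp (λ t)` into `exp (-b |λ|)`.
-/

open Real MeasureTheory

/-- `K_a(z) = exp(-a cosh z)` on the reals (as a complex number). -/
noncomputable def Ka (a : ℝ) (x : ℝ) : ℂ := Complex.exp (-(a : ℂ) * Complex.cosh (x : ℂ))

/-- The Fourier transform `K̂_a(u) = ∫ K_a(x) e^{-iux} dx`. -/
noncomputable def Khat (a : ℝ) (u : ℝ) : ℂ :=
  ∫ x : ℝ, Ka a x * Complex.exp (-Complex.I * (u * x))

open Filter Topology Set

theorem Real.sq_div_four_le_cosh (x : ℝ) : x ^ 2 / 4 ≤ Real.cosh x := by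
  rw [← Real.cosh_abs, Real.cosh_eq]
  have := Real.quadratic_le_exp_of_nonneg (abs_nonneg x)
  have := (Real.exp_pos (-|x|)).le
  nlinarith [sq_abs x, abs_nonneg x]

theorem Real.mul_exp_neg_mul_le {c : ℝ} (hc : 0 < c) (y : ℝ) :
    y * Real.exp (-c * y) ≤ 2 / c * Real.exp (-(c / 2) * y) := by
  have hsplit : -c * y = -(c / 2) * y + -(c / 2) * y := by ring
  rw [hsplit, Real.exp_add, ← mul_assoc]
  gcongr
  have hE := Real.exp_pos (-(c / 2) * y)
  have hprod : Real.exp (c / 2 * y) * Real.exp (-(c / 2) * y) = 1 := by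
    rw [← Real.exp_add, neg_mul, add_neg_cancel, Real.exp_zero]
  rw [le_div_iff₀ hc]
  nlinarith [mul_le_mul_of_nonneg_right (Real.add_one_le_exp (c / 2 * y)) hE.le]

theorem integrable_exp_neg_mul_cosh {c : ℝ} (hc : 0 < c) :
    Integrable fun x : ℝ => Real.exp (-c * Real.cosh x) := by
  refine (integrable_exp_neg_mul_sq (b := c / 4) (by positivity)).mono' (by fun_prop)
    (ae_of_all _ fun x => ?_)
  rw [Real.norm_of_nonneg (Real.exp_pos _).le, Real.exp_le_exp]
  nlinarith [Real.sq_div_four_le_cosh x]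

theorem integrable_add_mul_exp_neg_mul_cosh (p q : ℝ) {c : ℝ} (hc : 0 < c) :
    Integrable fun x : ℝ => (p * Real.cosh x + q) * Real.exp (-c * Real.cosh x) := by
  have hcosh : Integrable fun x : ℝ => Real.cosh x * Real.exp (-c * Real.cosh x) :=
    ((integrable_exp_neg_mul_cosh (half_pos hc)).const_mul (2 / c)).mono' (by fun_prop)
      (ae_of_all _ fun x => by
        rw [Real.norm_of_nonneg (by positivity)]
        exact Real.mul_exp_neg_mul_le hc _)
  simpa only [add_mul, mul_assoc, Pi.add_def] using
    (hcosh.const_mul p).add ((integrable_exp_neg_mul_cosh hc).const_mul q)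

theorem Complex.norm_sinh_le_cosh_re (z : ℂ) : ‖Complex.sinh z‖ ≤ Real.cosh z.re := by
  rw [Complex.sinh, Real.cosh_eq, norm_div, Complex.norm_two]
  gcongr
  refine (norm_sub_le _ _).trans_eq ?_
  simp [Complex.norm_exp]

open Complex in
theorem integral_add_mul_I_eq_of_deriv_dominated {f : ℂ → ℂ} (hf : Differentiable ℂ f)
    {c d : ℝ} (hf_int : ∀ t ∈ Ioo c d, Integrable fun x : ℝ => f (x + t * I))
    (hf'_dom : ∀ t ∈ Ioo c d, ∃ bound : ℝ → ℝ, Integrable bound ∧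
      ∀ᶠ s : ℝ in 𝓝 t, ∀ x : ℝ, ‖deriv f (x + s * I)‖ ≤ bound x)
    {t₁ t₂ : ℝ} (ht₁ : t₁ ∈ Ioo c d) (ht₂ : t₂ ∈ Ioo c d) :
    ∫ x : ℝ, f (x + t₁ * I) = ∫ x : ℝ, f (x + t₂ * I) := by
  have hvert (x s : ℝ) :
      HasDerivAt (fun s : ℝ => f (x + s * I)) (deriv f (x + s * I) * I) s := by
    have : HasDerivAt (fun s : ℝ => (x : ℂ) + s * I) I s := by
      simpa using ((hasDerivAt_id s).ofReal_comp.mul_const I).const_add (x : ℂ)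
    exact (hf _).hasDerivAt.comp s this
  have hhor (t x : ℝ) : HasDerivAt (fun x : ℝ => f (x + t * I)) (deriv f (x + t * I)) x :=
    ((hf _).hasDerivAt.comp_add_const (x : ℂ) ((t : ℂ) * I)).comp_ofReal
  have hmeas (t : ℝ) : AEStronglyMeasurable (fun x : ℝ => deriv f (x + t * I)) volume :=
    (hf.deriv.continuous.comp (by fun_prop)).aestronglyMeasurable
  have hderiv : ∀ t ∈ Ioo c d, HasDerivAt (fun t : ℝ => ∫ x : ℝ, f (x + t * I)) 0 t := by
    intro t ht
    obtain ⟨bound, hbound_int, hbound⟩ := hf'_dom t ht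
    have hf'_int : Integrable fun x : ℝ => deriv f (x + t * I) :=
      hbound_int.mono' (hmeas t) (ae_of_all _ hbound.self_of_nhds)
    have hJ := (hasDerivAt_integral_of_dominated_loc_of_deriv_le
      (F := fun (s x : ℝ) => f (x + s * I)) (F' := fun (s x : ℝ) => deriv f (x + s * I) * I)
      hbound (Eventually.of_forall fun s => (hf.continuous.comp (by fun_prop)).aestronglyMeasurable)
      (hf_int t ht) ((hmeas t).mul_const I) (ae_of_all _ fun x s hs => by simpa using hs x)
      hbound_int (ae_of_all _ fun x s _ => hvert x s)).2
    rwa [integral_mul_const, integral_eq_zero_of_hasDerivAt_of_integrable (hhor t) hf'_int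
      (hf_int t ht), zero_mul] at hJ
  exact isOpen_Ioo.is_const_of_deriv_eq_zero isPreconnected_Ioo
    (fun t ht => (hderiv t ht).differentiableAt.differentiableWithinAt)
    (fun t ht => (hderiv t ht).deriv) ht₁ ht₂

noncomputable def KaFourierIntegrand (a u : ℝ) (z : ℂ) : ℂ :=
  Complex.exp (-a * Complex.cosh z - Complex.I * u * z)

namespace KaFourierIntegrand

open Complex (I)

variable {a u : ℝ}

theorem hasDerivAt (z : ℂ) :
    HasDerivAt (KaFourierIntegrand a u)
      ((-a * Complex.sinh z - I * u) * KaFourierIntegrand a u z) z := by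
  have h : HasDerivAt (fun z : ℂ => -a * Complex.cosh z - I * u * z)
      (-a * Complex.sinh z - I * u) z := by
    simpa only [mul_one] using ((Complex.hasDerivAt_cosh z).const_mul (-(a : ℂ))).fun_sub
      ((hasDerivAt_id' z).const_mul (I * u))
  exact h.cexp.congr_deriv (mul_comm _ _)

theorem differentiable : Differentiable ℂ (KaFourierIntegrand a u) :=
  fun z => hasDerivAt z |>.differentiableAt

theorem norm_add_mul_I (x t : ℝ) :
    ‖KaFourierIntegrand a u (x + t * I)‖ =
      Real.exp (u * t) * Real.exp (-a * Real.cos t * Real.cosh x) := by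
  rw [KaFourierIntegrand, Complex.norm_exp, ← Real.exp_add, Complex.cosh_add, Complex.cosh_mul_I,
    Complex.sinh_mul_I]
  congr 1
  simp [Complex.cosh_ofReal_re, Complex.sinh_ofReal_re, Complex.cos_ofReal_re,
    Complex.sin_ofReal_re]
  ring

theorem norm_deriv_le (ha : 0 ≤ a) (z : ℂ) :
    ‖deriv (KaFourierIntegrand a u) z‖ ≤
      (a * Real.cosh z.re + |u|) * ‖KaFourierIntegrand a u z‖ := by
  rw [(hasDerivAt z).deriv, norm_mul]
  gcongr
  refine (norm_sub_le _ _).trans ?_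
  simp only [norm_mul, norm_neg, Complex.norm_real, Complex.norm_I, one_mul, Real.norm_eq_abs,
    abs_of_nonneg ha]
  gcongr
  exact Complex.norm_sinh_le_cosh_re z

theorem norm_add_mul_I_le (ha : 0 ≤ a) {β : ℝ} (hβ : β ≤ π) (x : ℝ) {t : ℝ}
    (ht : |t| ≤ β) :
    ‖KaFourierIntegrand a u (x + t * I)‖ ≤
      Real.exp (|u| * β) * Real.exp (-a * Real.cos β * Real.cosh x) := by
  rw [norm_add_mul_I]
  have hcos : Real.cos β ≤ Real.cos t := by
    rw [← Real.cos_abs t]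
    exact Real.cos_le_cos_of_nonneg_of_le_pi (abs_nonneg t) hβ ht
  gcongr Real.exp ?_ * Real.exp ?_
  · calc u * t ≤ |u| * |t| := by rw [← abs_mul]; exact le_abs_self _
      _ ≤ |u| * β := by gcongr
  · have := Real.cosh_pos x
    nlinarith [mul_le_mul_of_nonneg_left hcos ha]

theorem integrable_add_mul_I (ha : 0 < a) {t : ℝ} (ht : |t| < π / 2) :
    Integrable fun x : ℝ => KaFourierIntegrand a u (x + t * I) := by
  have hc : 0 < a * Real.cos t := mul_pos ha (Real.cos_pos_of_mem_Ioo (abs_lt.1 ht))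
  refine ((integrable_exp_neg_mul_cosh hc).const_mul (Real.exp (u * t))).mono'
    (differentiable.continuous.comp (by fun_prop)).aestronglyMeasurable
    (ae_of_all _ fun x => ?_)
  rw [norm_add_mul_I, neg_mul_eq_neg_mul]

theorem integral_add_mul_I (ha : 0 < a) {t : ℝ} (ht : |t| < π / 2) :
    ∫ x : ℝ, KaFourierIntegrand a u (x + t * I) = Khat a u := by
  have hKhat : Khat a u = ∫ x : ℝ, KaFourierIntegrand a u (x + (0 : ℝ) * I) := by
    simp only [Complex.ofReal_zero, zero_mul, add_zero]
    unfold Khat Ka KaFourierIntegrand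
    congr 1 with x
    rw [← Complex.exp_add]
    congr 1
    ring
  have hstrip {s : ℝ} : s ∈ Ioo (-(π / 2)) (π / 2) ↔ |s| < π / 2 := abs_lt.symm
  rw [hKhat]
  refine integral_add_mul_I_eq_of_deriv_dominated differentiable
    (fun s hs => integrable_add_mul_I ha (hstrip.1 hs)) (fun s hs => ?_)
    (hstrip.2 ht) (hstrip.2 (by simpa using pi_div_two_pos))
  obtain ⟨β, hsβ, hβ⟩ := exists_between (hstrip.1 hs)
  have hc : 0 < a * Real.cos β :=
    mul_pos ha (Real.cos_pos_of_mem_Ioo ⟨by linarith [abs_nonneg s], hβ⟩)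
  refine ⟨fun x => Real.exp (|u| * β) *
      ((a * Real.cosh x + |u|) * Real.exp (-a * Real.cos β * Real.cosh x)), ?_, ?_⟩
  · simpa only [neg_mul_eq_neg_mul] using
      (integrable_add_mul_exp_neg_mul_cosh a |u| hc).const_mul (Real.exp (|u| * β))
  filter_upwards [continuous_abs.continuousAt.eventually_lt continuousAt_const hsβ] with τ hτ x
  calc ‖deriv (KaFourierIntegrand a u) (x + τ * I)‖
      ≤ (a * Real.cosh x + |u|) * ‖KaFourierIntegrand a u (x + τ * I)‖ := by
        simpa using norm_deriv_le ha.le (x + τ * I)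
    _ ≤ (a * Real.cosh x + |u|) *
          (Real.exp (|u| * β) * Real.exp (-a * Real.cos β * Real.cosh x)) := by
        gcongr
        exact norm_add_mul_I_le ha.le (by linarith [pi_pos]) x hτ.le
    _ = _ := by ring

end KaFourierIntegrand

/-- For `a > 0` and `0 < b < π/2`, for every real `λ`,
`|K̂_a(λ)| ≤ κ e^{-b|λ|}` with `κ = 2∫_0^∞ exp(-a cos b cosh u) du`. -/
theorem Khat_exp_decay (a b : ℝ) (ha : 0 < a) (hb0 : 0 < b) (hb : b < π / 2) (lam : ℝ) :
    ‖Khat a lam‖ ≤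
      (2 * ∫ u in Set.Ioi (0 : ℝ), Real.exp (-a * Real.cos b * Real.cosh u)) *
        Real.exp (-b * |lam|) := by
  obtain ⟨t, habs, hlam⟩ : ∃ t : ℝ, |t| = b ∧ lam * t = -b * |lam| := by
    rcases le_or_gt 0 lam with h | h
    · exact ⟨-b, by simp [abs_of_pos hb0], by rw [abs_of_nonneg h]; ring⟩
    · exact ⟨b, abs_of_pos hb0, by rw [abs_of_neg h]; ring⟩
  have hcos : Real.cos t = Real.cos b := by rw [← Real.cos_abs, habs]
  have heven : ∫ x : ℝ, Real.exp (-a * Real.cos b * Real.cosh x) =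
      2 * ∫ x in Ioi (0 : ℝ), Real.exp (-a * Real.cos b * Real.cosh x) := by
    simpa only [Real.cosh_abs] using
      integral_comp_abs (f := fun x => Real.exp (-a * Real.cos b * Real.cosh x))
  calc ‖Khat a lam‖ = ‖∫ x : ℝ, KaFourierIntegrand a lam (x + t * Complex.I)‖ := by
        rw [KaFourierIntegrand.integral_add_mul_I ha (habs ▸ hb)]
    _ ≤ ∫ x : ℝ, ‖KaFourierIntegrand a lam (x + t * Complex.I)‖ :=
        norm_integral_le_integral_norm _
    _ = _ := by
        simp_rw [KaFourierIntegrand.norm_add_mul_I, hcos, hlam]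
        rw [integral_const_mul, heven, mul_comm]
end

section
/- Let (1, α₁, …, α_n) be a vector of real numbers whose components are linearly independent over the field ℚ of rational numbers, let β₁, …, β_n be arbitrary real numbers, and let ε satisfy 0 < ε < 0.5. Then there exists a constant c = c(α₁,…,α_n, ε) > 0 such that every interval of real numbers of length c contains at least one value t for which the inequalities ‖t·α_j + β_j‖ < ε hold simultaneously for all j = 1, …, n. -/
open Real

/-!
Averaging argument. `F t = ∏ⱼ cos (π (t αⱼ + βⱼ)) ^ (2m)` is a trigonometric polynomial: its
constant term is `K = (binom(2m, m) / 4 ^ m) ^ n` and its other frequencies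
`∑ⱼ (aⱼ - m) αⱼ` are nonzero because the `αⱼ` are `ℚ`-independent. Each nonconstant term has
bounded primitive, so the integral of `F` over any interval of length `T` is `K T + O(1)`;
for `T` large, every such interval therefore contains a `t` with `F t > cos (π ε) ^ (2m)`,
and then every factor exceeds `cos (π ε) ^ (2m)`, i.e. `‖t αⱼ + βⱼ‖ < ε`. Such an `m` exists
since `K ≥ (2m)⁻ⁿ` decays only polynomially while `cos (π ε) ^ (2m)` decays geometrically.
-/

theorem cos_pi_mul_pow_two_mul_eq_sum (m : ℕ) (θ : ℝ) :
    (cos (π * θ) : ℂ) ^ (2 * m) =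
      (∑ a ∈ Finset.range (2 * m + 1),
        (Nat.choose (2 * m) a : ℂ) * Complex.exp (2 * π * Complex.I * (((a : ℂ) - m) * θ))) /
        4 ^ m := by
  have hcos : (cos (π * θ) : ℂ) =
      (Complex.exp (π * θ * Complex.I) + Complex.exp (-(π * θ * Complex.I))) / 2 := by
    rw [Complex.ofReal_cos, Complex.cos, Complex.ofReal_mul]
    ring_nf
  rw [hcos, div_pow, show (2 : ℂ) ^ (2 * m) = 4 ^ m by rw [pow_mul]; norm_num, add_pow]
  congr 1
  refine Finset.sum_congr rfl fun a ha => ?_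
  have ha' : a ≤ 2 * m := Nat.lt_succ_iff.mp (Finset.mem_range.mp ha)
  rw [← Complex.exp_nat_mul, ← Complex.exp_nat_mul, ← Complex.exp_add, mul_comm,
    Nat.cast_sub ha']
  push_cast
  ring_nf

theorem prod_cos_pi_mul_pow_two_mul_eq_sum {n : ℕ} (m : ℕ) (θ : Fin n → ℝ) :
    ((∏ j, cos (π * θ j) ^ (2 * m) : ℝ) : ℂ) =
      ∑ A ∈ Fintype.piFinset fun _ => Finset.range (2 * m + 1),
        (((∏ j, (Nat.choose (2 * m) (A j) : ℝ)) / 4 ^ (m * n) : ℝ) : ℂ) *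
          Complex.exp (2 * π * Complex.I * ((∑ j, ((A j : ℝ) - m) * θ j : ℝ) : ℂ)) := by
  simp_rw [Complex.ofReal_prod, Complex.ofReal_pow, cos_pi_mul_pow_two_mul_eq_sum,
    Finset.prod_div_distrib, Finset.prod_const, Finset.card_univ, Fintype.card_fin, ← pow_mul,
    Finset.prod_univ_sum, Finset.sum_div]
  refine Finset.sum_congr rfl fun A _ => ?_
  rw [Finset.prod_mul_distrib, ← Complex.exp_sum, ← Finset.mul_sum]
  push_cast
  ring

open Finset Complex in
theorem norm_integral_exp_ofReal_mul_I_le {l : ℝ} (hl : l ≠ 0) (a b : ℝ) :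
    ‖∫ t in a..b, exp (l * t * I)‖ ≤ 2 / |l| := by
  have hc : (l * I : ℂ) ≠ 0 := mul_ne_zero (ofReal_ne_zero.mpr hl) I_ne_zero
  have hnorm : ∀ s : ℝ, ‖exp (l * I * s)‖ = 1 := fun s => by
    rw [show (l * I * s : ℂ) = ((l * s : ℝ) : ℂ) * I by push_cast; ring, norm_exp_ofReal_mul_I]
  simp_rw [mul_right_comm _ _ I]
  rw [integral_exp_mul_complex hc, norm_div, norm_mul, norm_I, mul_one, norm_real,
    Real.norm_eq_abs]
  gcongr
  exact (norm_sub_le _ _).trans (by rw [hnorm, hnorm]; norm_num)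

open Finset Complex in
theorem abs_integral_sub_le_of_eq_add_sum_exp {ι : Type*} (s : Finset ι) (c : ι → ℂ)
    (l : ι → ℝ) (hl : ∀ i ∈ s, l i ≠ 0) (K : ℝ) {F : ℝ → ℝ}
    (hF : ∀ t, (F t : ℂ) = K + ∑ i ∈ s, c i * exp (l i * t * I)) (a b : ℝ) :
    |(∫ t in a..b, F t) - K * (b - a)| ≤ ∑ i ∈ s, ‖c i‖ * (2 / |l i|) := by
  have hcont : ∀ i, Continuous fun t : ℝ => c i * exp (l i * t * I) := fun i => by fun_prop
  have hint : (((∫ t in a..b, F t) - K * (b - a) : ℝ) : ℂ) =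
      ∑ i ∈ s, c i * ∫ t in a..b, exp (l i * t * I) := by
    rw [ofReal_sub, ← intervalIntegral.integral_ofReal, funext hF,
      intervalIntegral.integral_add intervalIntegrable_const
        ((continuous_finsetSum s fun i _ => hcont i).intervalIntegrable _ _),
      intervalIntegral.integral_finsetSum fun i _ => (hcont i).intervalIntegrable _ _]
    simp only [intervalIntegral.integral_const, real_smul, ofReal_sub, ofReal_mul,
      intervalIntegral.integral_const_mul]
    ring
  rw [← Real.norm_eq_abs, ← Complex.norm_real, hint]
  refine (norm_sum_le _ _).trans (sum_le_sum fun i hi => ?_)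
  rw [norm_mul]
  gcongr
  exact norm_integral_exp_ofReal_mul_I_le (hl i hi) a b

theorem exists_mem_Icc_lt_of_le_integral {F : ℝ → ℝ} (hF : Continuous F) {q K E : ℝ}
    (hqK : q < K) (hE : ∀ x y, K * (y - x) - E ≤ ∫ t in x..y, F t) :
    ∃ c > 0, ∀ x, ∃ t ∈ Set.Icc x (x + c), q < F t := by
  set c := max E 0 / (K - q) + 1
  have hc : 0 < c := by positivity
  refine ⟨c, hc, fun x => ?_⟩
  by_contra! hle
  have hmono : (∫ t in x..x + c, F t) ≤ q * c := by
    simpa [mul_comm] using intervalIntegral.integral_mono_on (by linarith)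
      (hF.intervalIntegrable _ _) (intervalIntegrable_const (μ := MeasureTheory.volume)) hle
  have hlow := hE x (x + c)
  have : max E 0 < (K - q) * c := by
    rw [mul_add, mul_div_cancel₀ _ (sub_ne_zero.mpr hqK.ne')]; linarith
  nlinarith [le_max_left E 0]

theorem exists_pow_lt_centralBinom_div_four_pow_pow {q : ℝ} (hq0 : 0 ≤ q) (hq1 : q < 1)
    (n : ℕ) : ∃ m : ℕ, q ^ m < ((m.centralBinom : ℝ) / 4 ^ m) ^ n := by
  have hlim : Filter.Tendsto (fun m : ℕ => (2 : ℝ) ^ n * ((m : ℝ) ^ n * q ^ m)) Filter.atTop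
      (nhds 0) := by
    simpa using (tendsto_pow_const_mul_const_pow_of_abs_lt_one n
      (by rwa [abs_of_nonneg hq0])).const_mul ((2 : ℝ) ^ n)
  obtain ⟨m, hm, hm1⟩ :=
    ((hlim.eventually (eventually_lt_nhds one_pos)).and (Filter.eventually_ge_atTop 1)).exists
  refine ⟨m, ?_⟩
  have hbinom : (1 : ℝ) / (2 * m) ≤ m.centralBinom / 4 ^ m := by
    rw [div_le_div_iff₀ (by positivity) (by positivity)]
    rw [one_mul, mul_comm]
    exact_mod_cast Nat.four_pow_le_two_mul_self_mul_centralBinom m hm1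
  calc q ^ m < (1 / (2 * m)) ^ n := by
        rw [div_pow, one_pow, lt_div_iff₀ (by positivity), mul_pow]
        linarith
    _ ≤ _ := by gcongr

theorem abs_sub_round_lt_of_cos_sq_lt {ε θ : ℝ} (hε : 0 ≤ ε)
    (h : cos (π * ε) ^ 2 < cos (π * θ) ^ 2) : |θ - round θ| < ε := by
  set d := |θ - round θ|
  have hd : cos (π * θ) ^ 2 = cos (π * d) ^ 2 := by
    rw [cos_sq, cos_sq, show 2 * (π * θ) = 2 * (π * (θ - round θ)) + round θ * (2 * π) by ring,
      cos_add_int_mul_two_pi, ← cos_abs (2 * (π * (θ - round θ))), abs_mul, abs_mul,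
      abs_of_pos two_pos, abs_of_pos pi_pos]
  by_contra! hεd
  have hd2 : d ≤ 1 / 2 := abs_sub_round θ
  have hcos : cos (π * d) ≤ cos (π * ε) :=
    cos_le_cos_of_nonneg_of_le_pi (by positivity) (by nlinarith [pi_pos]) (by nlinarith [pi_pos])
  have hcosd : 0 ≤ cos (π * d) :=
    cos_nonneg_of_mem_Icc ⟨by nlinarith [pi_pos, abs_nonneg (θ - round θ)], by nlinarith [pi_pos]⟩
  nlinarith

theorem Fintype.prod_le_apply_of_le_one {ι R : Type*} [Fintype ι] [CommMonoidWithZero R]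
    [Preorder R] [ZeroLEOneClass R] [PosMulMono R] {f : ι → R} (h0 : ∀ i, 0 ≤ f i)
    (h1 : ∀ i, f i ≤ 1) (j : ι) : ∏ i, f i ≤ f j := by
  classical
  simpa using Finset.prod_le_prod_of_subset_of_le_one (Finset.subset_univ {j})
    (fun i _ => h0 i) (fun i _ _ => h1 i)

theorem LinearIndependent.sum_ratCast_mul_ne_zero {ι : Type*} [Fintype ι] {α : ι → ℝ}
    (hα : LinearIndependent ℚ α) {g : ι → ℚ} (hg : g ≠ 0) : ∑ j, (g j : ℝ) * α j ≠ 0 := by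
  intro h
  refine hg (funext <| Fintype.linearIndependent_iff.mp hα g ?_)
  simpa [Rat.smul_def] using h

theorem exists_abs_integral_prod_cos_pow_sub_le {n : ℕ} {α : Fin n → ℝ}
    (hα : LinearIndependent ℚ α) (β : Fin n → ℝ) (m : ℕ) :
    ∃ E, ∀ a b, |(∫ t in a..b, ∏ j, cos (π * (t * α j + β j)) ^ (2 * m)) -
      ((m.centralBinom : ℝ) / 4 ^ m) ^ n * (b - a)| ≤ E := by
  classical
  set S := Fintype.piFinset fun _ : Fin n => Finset.range (2 * m + 1)
  set A₀ : Fin n → ℕ := fun _ => m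
  have hA₀ : A₀ ∈ S :=
    Fintype.mem_piFinset.mpr fun _ => Finset.mem_range.mpr (by simp only [A₀]; omega)
  set w : (Fin n → ℕ) → ℝ := fun A => (∏ j, (Nat.choose (2 * m) (A j) : ℝ)) / 4 ^ (m * n)
  set ω : (Fin n → ℝ) → (Fin n → ℕ) → ℝ := fun θ A => ∑ j, ((A j : ℝ) - m) * θ j
  have hω : ∀ A ≠ A₀, ω α A ≠ 0 := fun A hA => by
    have := hα.sum_ratCast_mul_ne_zero (g := fun j => (A j : ℚ) - m)
      fun h => hA (funext fun j => by exact_mod_cast sub_eq_zero.mp (congrFun h j))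
    simpa using this
  refine ⟨_, abs_integral_sub_le_of_eq_add_sum_exp (S.erase A₀)
    (fun A => w A * Complex.exp (2 * π * Complex.I * ω β A)) (fun A => 2 * π * ω α A)
    (fun A hA => mul_ne_zero (by positivity) (hω A (Finset.ne_of_mem_erase hA))) _ fun t => ?_⟩
  rw [prod_cos_pi_mul_pow_two_mul_eq_sum, ← Finset.add_sum_erase S _ hA₀]
  congr 1
  · simp [A₀, Nat.centralBinom_eq_two_mul_choose, div_pow, ← pow_mul]
  · refine Finset.sum_congr rfl fun A _ => ?_
    have : ∑ j, ((A j : ℝ) - m) * (t * α j + β j) = ω α A * t + ω β A := by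
      simp only [ω, Finset.sum_mul, ← Finset.sum_add_distrib]
      exact Finset.sum_congr rfl fun j _ => by ring
    rw [this, mul_assoc _ (Complex.exp _), ← Complex.exp_add]
    congr 2
    push_cast
    ring

/-- Corollary of Lemma 6 (inhomogeneous version): if `1, α₁, …, α_n` are linearly
independent over `ℚ`, `β₁, …, β_n` are arbitrary reals and `0 < ε < 1/2`, then there is a
constant `c > 0` such that every interval of length `c` contains a point `t` with
`‖t αⱼ + βⱼ‖ < ε` (distance to the nearest integer) for all `j = 1, …, n`. -/
theorem dirichlet_approx_inhomogeneous (n : ℕ) (α β : Fin n → ℝ)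
    (hα : LinearIndependent ℚ (Fin.cons (1 : ℝ) α))
    (ε : ℝ) (hε0 : 0 < ε) (hε : ε < 1 / 2) :
    ∃ c : ℝ, 0 < c ∧ ∀ x : ℝ, ∃ t ∈ Set.Icc x (x + c),
      ∀ j : Fin n, |t * α j + β j - round (t * α j + β j)| < ε := by
  have hq1 : cos (π * ε) ^ 2 < 1 := by
    rw [cos_sq']
    have := sin_pos_of_pos_of_lt_pi (by positivity : 0 < π * ε) (by nlinarith [pi_pos])
    nlinarith
  obtain ⟨m, hm⟩ := exists_pow_lt_centralBinom_div_four_pow_pow (sq_nonneg _) hq1 n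
  set F : ℝ → ℝ := fun t => ∏ j, (cos (π * (t * α j + β j)) ^ 2) ^ m
  obtain ⟨E, hE⟩ := exists_abs_integral_prod_cos_pow_sub_le (linearIndependent_finCons.mp hα).1 β m
  obtain ⟨c, hc, hF⟩ := exists_mem_Icc_lt_of_le_integral (F := F) (by fun_prop) hm
    fun a b => by simpa [F, ← pow_mul] using (abs_le.mp (hE a b)).1
  refine ⟨c, hc, fun x => ?_⟩
  obtain ⟨t, ht, hFt⟩ := hF x
  refine ⟨t, ht, fun j => abs_sub_round_lt_of_cos_sq_lt hε0.le ?_⟩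
  refine lt_of_pow_lt_pow_left₀ m (sq_nonneg _) (hFt.trans_le ?_)
  exact Fintype.prod_le_apply_of_le_one (fun _ => by positivity) (fun i => pow_le_one₀ (sq_nonneg _)
    (cos_sq_le_one _)) j
end

section
/- For every a > 1, the value of the Fourier transform of K_a at 0 satisfies the two-sided estimate (7/8)·e^{−a}·√(2π/a) < K̂_a(0) < e^{−a}·√(2π/a), where K̂_a(0) = ∫_{−∞}^{+∞} exp(−a·cosh x) dx. -/
/-!
The substitution `x = 2 arsinh (u / 2)` turns `cosh x` into `1 + u² / 2`, so that
`K̂_a(0) = e^{-a} ∫ (1 + u² / 4)^{-1/2} e^{-a u² / 2} du`. The weight `(1 + u² / 4)^{-1/2}` lies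
between `1 - u² / 8` and `1`, and is `< 1` for `u ≠ 0`. Integrating against the Gaussian
(`∫ e^{-a u²/2} = √(2π/a)`, `∫ u² e^{-a u²/2} = √(2π/a) / a`) gives
`(1 - 1/(8a)) √(2π/a) ≤ e^a K̂_a(0) < √(2π/a)`, and `1 - 1/(8a) > 7/8` when `a > 1`.
-/

open Real MeasureTheory

theorem integral_lt_integral_of_continuous_of_le_of_lt {X : Type*} [TopologicalSpace X]
    [MeasurableSpace X] {μ : Measure X} [μ.IsOpenPosMeasure] {f g : X → ℝ}
    (hf : Continuous f) (hg : Continuous g) (hfi : Integrable f μ) (hgi : Integrable g μ)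
    (hle : f ≤ g) {x₀ : X} (hlt : f x₀ < g x₀) : ∫ x, f x ∂μ < ∫ x, g x ∂μ := by
  have hpos := integral_pos_of_integrable_nonneg_nonzero (hg.sub hf) (hgi.sub hfi)
    (fun x => sub_nonneg.2 (hle x)) (sub_ne_zero.2 hlt.ne')
  simp only [Pi.sub_apply, integral_sub hgi hfi] at hpos
  linarith

theorem integrable_sq_mul_exp_neg_mul_sq {b : ℝ} (hb : 0 < b) :
    Integrable fun x : ℝ => x ^ 2 * exp (-b * x ^ 2) := by
  simpa using integrable_rpow_mul_exp_neg_mul_sq hb (s := 2) (by norm_num)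

theorem integral_sq_mul_exp_neg_mul_sq {b : ℝ} (hb : 0 < b) :
    ∫ x : ℝ, x ^ 2 * exp (-b * x ^ 2) = √(π / b) / (2 * b) := by
  have hderiv : ∀ x : ℝ, HasDerivAt (fun x => x * exp (-b * x ^ 2))
      (exp (-b * x ^ 2) - 2 * b * (x ^ 2 * exp (-b * x ^ 2))) x := by
    intro x
    refine ((hasDerivAt_id' x).mul ((hasDerivAt_pow 2 x).const_mul (-b)).exp).congr_deriv ?_
    norm_num
    ring
  have hzero := integral_eq_zero_of_hasDerivAt_of_integrable hderiv
    ((integrable_exp_neg_mul_sq hb).sub ((integrable_sq_mul_exp_neg_mul_sq hb).const_mul _))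
    (integrable_mul_exp_neg_mul_sq hb)
  rw [integral_sub (integrable_exp_neg_mul_sq hb)
    ((integrable_sq_mul_exp_neg_mul_sq hb).const_mul _), integral_const_mul,
    integral_gaussian] at hzero
  rw [eq_div_iff (by positivity)]
  linarith

theorem integral_comp_cosh {E : Type*} [NormedAddCommGroup E] [NormedSpace ℝ E] (g : ℝ → E) :
    ∫ x : ℝ, g (cosh x) = ∫ u : ℝ, (√(1 + (u / 2) ^ 2))⁻¹ • g (1 + u ^ 2 / 2) := by
  set f : ℝ → ℝ := fun u => 2 * arsinh (u / 2)
  have hderiv (u : ℝ) : HasDerivAt f (√(1 + (u / 2) ^ 2))⁻¹ u := by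
    refine (((hasDerivAt_arsinh (u / 2)).comp u ((hasDerivAt_id' u).div_const 2)).const_mul
      2).congr_deriv ?_
    ring
  have hsurj : Function.Surjective f := fun y =>
    ⟨2 * sinh (y / 2), by simp [f, arsinh_sinh]; ring⟩
  have hinj : Function.Injective f := fun u v h => by
    simpa using arsinh_injective (mul_left_cancel₀ two_ne_zero h)
  have hcosh (u : ℝ) : cosh (f u) = 1 + u ^ 2 / 2 := by
    simp only [f, cosh_two_mul, cosh_sq, sinh_arsinh]
    ring
  have key := integral_image_eq_integral_abs_deriv_smul MeasurableSet.univ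
    (fun u _ => (hderiv u).hasDerivWithinAt) hinj.injOn (fun x => g (cosh x))
  rw [Set.image_univ, hsurj.range_eq] at key
  simpa only [Measure.restrict_univ, hcosh, abs_of_nonneg (inv_nonneg.2 (sqrt_nonneg _))]
    using key

theorem integral_exp_neg_mul_cosh (a : ℝ) :
    ∫ x : ℝ, exp (-a * cosh x) =
      exp (-a) * ∫ u : ℝ, (√(1 + (u / 2) ^ 2))⁻¹ * exp (-(a / 2) * u ^ 2) := by
  rw [integral_comp_cosh (fun y => exp (-a * y)), ← integral_const_mul]
  congr 1 with u
  rw [smul_eq_mul, show -a * (1 + u ^ 2 / 2) = -a + -(a / 2) * u ^ 2 by ring, exp_add]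
  ring

theorem inv_sqrt_one_add_sq_le_one (t : ℝ) : (√(1 + t ^ 2))⁻¹ ≤ 1 :=
  inv_le_one_of_one_le₀ (one_le_sqrt.2 (le_add_of_nonneg_right (sq_nonneg t)))

theorem inv_sqrt_one_add_sq_lt_one {t : ℝ} (ht : t ≠ 0) : (√(1 + t ^ 2))⁻¹ < 1 :=
  inv_lt_one_of_one_lt₀ <| (lt_sqrt zero_le_one).2 <| by
    rw [one_pow]
    exact lt_add_of_pos_right 1 (by positivity)

theorem one_sub_sq_div_two_le_inv_sqrt_one_add_sq (t : ℝ) :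
    1 - t ^ 2 / 2 ≤ (√(1 + t ^ 2))⁻¹ := by
  have hsqrt : √(1 + t ^ 2) ≤ 1 + t ^ 2 / 2 :=
    sqrt_le_iff.2 ⟨by positivity, by nlinarith [sq_nonneg (t ^ 2)]⟩
  calc 1 - t ^ 2 / 2 ≤ (1 + t ^ 2 / 2)⁻¹ := by
        rw [← one_div, le_div_iff₀ (by positivity)]
        nlinarith [sq_nonneg (t ^ 2)]
    _ ≤ (√(1 + t ^ 2))⁻¹ := inv_anti₀ (by positivity) hsqrt

theorem integrable_inv_sqrt_mul_exp_neg_mul_sq {b : ℝ} (hb : 0 < b) :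
    Integrable fun u : ℝ => (√(1 + (u / 2) ^ 2))⁻¹ * exp (-b * u ^ 2) :=
  (integrable_exp_neg_mul_sq hb).bdd_mul (c := 1)
    (by fun_prop (disch := intro; positivity) : Continuous _).aestronglyMeasurable
    (ae_of_all _ fun u => by simpa [abs_of_nonneg] using inv_sqrt_one_add_sq_le_one (u / 2))

theorem integral_inv_sqrt_mul_exp_neg_mul_sq_lt {b : ℝ} (hb : 0 < b) :
    ∫ u : ℝ, (√(1 + (u / 2) ^ 2))⁻¹ * exp (-b * u ^ 2) < √(π / b) := by
  rw [← integral_gaussian]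
  refine integral_lt_integral_of_continuous_of_le_of_lt (x₀ := 1)
    (by fun_prop (disch := intro; positivity)) (by fun_prop)
    (integrable_inv_sqrt_mul_exp_neg_mul_sq hb) (integrable_exp_neg_mul_sq hb) (fun u => ?_) ?_
  · exact mul_le_of_le_one_left (exp_pos _).le (inv_sqrt_one_add_sq_le_one _)
  · exact mul_lt_of_lt_one_left (exp_pos _) (inv_sqrt_one_add_sq_lt_one (by norm_num))

theorem le_integral_inv_sqrt_mul_exp_neg_mul_sq {b : ℝ} (hb : 0 < b) :
    √(π / b) * (1 - 1 / (16 * b)) ≤ ∫ u : ℝ, (√(1 + (u / 2) ^ 2))⁻¹ * exp (-b * u ^ 2) := by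
  have hsq := (integrable_sq_mul_exp_neg_mul_sq hb).div_const 8
  have hlower : ∫ u : ℝ, (exp (-b * u ^ 2) - u ^ 2 * exp (-b * u ^ 2) / 8) ≤
      ∫ u : ℝ, (√(1 + (u / 2) ^ 2))⁻¹ * exp (-b * u ^ 2) := by
    refine integral_mono ((integrable_exp_neg_mul_sq hb).sub hsq)
      (integrable_inv_sqrt_mul_exp_neg_mul_sq hb) fun u => ?_
    have := mul_le_mul_of_nonneg_right (one_sub_sq_div_two_le_inv_sqrt_one_add_sq (u / 2))
      (exp_pos (-b * u ^ 2)).le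
    linarith
  rw [integral_sub (integrable_exp_neg_mul_sq hb) hsq, integral_div, integral_gaussian,
    integral_sq_mul_exp_neg_mul_sq hb] at hlower
  calc √(π / b) * (1 - 1 / (16 * b)) = √(π / b) - √(π / b) / (2 * b) / 8 := by
        field_simp
        ring
    _ ≤ _ := hlower

/-- For every `a > 1`, `(7/8) e^{-a} √(2π/a) < K̂_a(0) < e^{-a} √(2π/a)`, where
`K̂_a(0) = ∫_{-∞}^{∞} exp(-a cosh x) dx`. -/
theorem Khat_zero_bounds (a : ℝ) (ha : 1 < a) :
    (7 / 8) * Real.exp (-a) * Real.sqrt (2 * π / a) <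
        (∫ x : ℝ, Real.exp (-a * Real.cosh x)) ∧
      (∫ x : ℝ, Real.exp (-a * Real.cosh x)) < Real.exp (-a) * Real.sqrt (2 * π / a) := by
  have hb : 0 < a / 2 := by linarith
  have hsqrt : √(2 * π / a) = √(π / (a / 2)) := by
    congr 1
    field_simp
  have hlower := le_integral_inv_sqrt_mul_exp_neg_mul_sq hb
  have hupper := integral_inv_sqrt_mul_exp_neg_mul_sq_lt hb
  have h78 : 7 / 8 < 1 - 1 / (16 * (a / 2)) := by
    rw [lt_sub_comm, div_lt_iff₀ (by linarith)]
    linarith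
  rw [integral_exp_neg_mul_cosh, hsqrt, mul_assoc, mul_left_comm]
  constructor
  · gcongr
    calc 7 / 8 * √(π / (a / 2)) < √(π / (a / 2)) * (1 - 1 / (16 * (a / 2))) := by
          rw [mul_comm]
          gcongr
      _ ≤ _ := hlower
  · gcongr
end
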